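/- arXiv:1701.06540 — 4 statements merged into one kernel-verified Lean document; each statement's English description precedes it below -/
import Mathlib

section
/- Let y ∈ ℤⁿ and r ∈ ℝⁿ. For every ε > 0 and every λ̄ ≥ 0, there exists a point z ∈ ℤⁿ whose Euclidean distance from the half-line {y + λr : λ ≥ λ̄} is less than ε. -/
open scoped BigOperators Pointwise

noncomputable section

/-- Euclidean space `ℝⁿ`. -/
abbrev E (n : ℕ) := EuclideanSpace ℝ (Fin n)

/-- Dot product on `ℝⁿ`. -/
def dot {n : ℕ} (x y : E n) : ℝ := ∑ i, x i * y i

/-- A point with integral coordinates. -/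
def IsIntPt {n : ℕ} (x : E n) : Prop := ∀ i, ∃ m : ℤ, x i = (m : ℝ)

/-- A vector with rational coordinates. -/
def IsRatVec {n : ℕ} (x : E n) : Prop := ∀ i, ∃ q : ℚ, x i = (q : ℝ)

/-- `S` is the set of integral points of a rational polyhedron `{x | Ax ≤ b}`. -/
def IsIntPtsOfRatPolyhedron {n : ℕ} (S : Set (E n)) : Prop :=
  ∃ (m : ℕ) (A : Fin m → E n) (b : Fin m → ℝ),
    (∀ i, IsRatVec (A i)) ∧ (∀ i, ∃ q : ℚ, b i = (q : ℝ)) ∧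
    S = {x | IsIntPt x ∧ ∀ i, dot (A i) x ≤ b i}

/-- `dim S = n`: `S` contains `n+1` affinely independent points. -/
def FullDimSet {n : ℕ} (S : Set (E n)) : Prop :=
  ∃ p : Fin (n + 1) → E n, (∀ i, p i ∈ S) ∧ AffineIndependent ℝ p

/-- `B` is `S`-free: the interior of `B` contains no point of `S`. -/
def SFree {n : ℕ} (S B : Set (E n)) : Prop := ∀ x ∈ interior B, x ∉ S

/-- `B` is a maximal `S`-free convex set. -/
def MaxSFree {n : ℕ} (S B : Set (E n)) : Prop :=
  Convex ℝ B ∧ SFree S B ∧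
    ∀ C : Set (E n), Convex ℝ C → SFree S C → B ⊆ C → B = C

/-- `B` is lattice-free: no integral point in its interior. -/
def LatticeFree {n : ℕ} (B : Set (E n)) : Prop := ∀ x ∈ interior B, ¬ IsIntPt x

/-- `B` is a maximal lattice-free convex set. -/
def MaxLatticeFree {n : ℕ} (B : Set (E n)) : Prop :=
  Convex ℝ B ∧ LatticeFree B ∧
    ∀ C : Set (E n), Convex ℝ C → LatticeFree C → B ⊆ C → B = C

/-- A polyhedron: finite intersection of closed half-spaces. -/
def IsPolyhedron {n : ℕ} (B : Set (E n)) : Prop :=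
  ∃ (m : ℕ) (a : Fin m → E n) (c : Fin m → ℝ), B = {x | ∀ i, dot (a i) x ≤ c i}

/-- A polytope: convex hull of finitely many points. -/
def IsPolytope {n : ℕ} (P : Set (E n)) : Prop :=
  ∃ V : Finset (E n), P = convexHull ℝ (V : Set (E n))

/-- Dimension of a set: dimension of its affine hull. -/
def sdim {n : ℕ} (A : Set (E n)) : ℕ := Module.finrank ℝ (affineSpan ℝ A).direction

/-- `F` is a face of the convex set `B`. -/
def IsFaceOf {n : ℕ} (F B : Set (E n)) : Prop :=
  F ⊆ B ∧ Convex ℝ F ∧ ∀ x ∈ B, ∀ y ∈ B, ∀ t : ℝ, 0 < t → t < 1 →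
    t • x + (1 - t) • y ∈ F → x ∈ F ∧ y ∈ F

/-- `F` is a facet of `B`: a nonempty face of dimension `dim B - 1`. -/
def IsFacetOf {n : ℕ} (F B : Set (E n)) : Prop :=
  IsFaceOf F B ∧ F.Nonempty ∧ sdim F + 1 = sdim B

/-- Recession cone of `K`. -/
def recCone {n : ℕ} (K : Set (E n)) : Set (E n) :=
  {d | ∀ x ∈ K, ∀ t : ℝ, 0 ≤ t → x + t • d ∈ K}

/-- Lineality space of `K`. -/
def linSpace {n : ℕ} (K : Set (E n)) : Set (E n) :=
  {d | d ∈ recCone K ∧ -d ∈ recCone K}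

/-- The set of all finite nonnegative combinations of elements of `G`. -/
def conicHullOf {n : ℕ} (G : Set (E n)) : Set (E n) :=
  {x | ∃ (m : ℕ) (c : Fin m → ℝ) (v : Fin m → E n),
    (∀ i, 0 ≤ c i) ∧ (∀ i, v i ∈ G) ∧ x = ∑ i, c i • v i}

/-- A cone is rational if it is generated by vectors with rational coordinates. -/
def IsRationalCone {n : ℕ} (C : Set (E n)) : Prop :=
  ∃ G : Set (E n), (∀ v ∈ G, IsRatVec v) ∧ C = conicHullOf G

/-- A linear subspace is rational if it is spanned by rational vectors. -/
def IsRationalSubspace {n : ℕ} (L : Submodule ℝ (E n)) : Prop :=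
  ∃ G : Set (E n), (∀ v ∈ G, IsRatVec v) ∧ L = Submodule.span ℝ G

/-- The hyperplane `{x | a·x = β}` is a supporting hyperplane of `C`. -/
def IsSupportingHyperplane {n : ℕ} (a : E n) (β : ℝ) (C : Set (E n)) : Prop :=
  ((∀ x ∈ C, dot a x ≤ β) ∨ (∀ x ∈ C, β ≤ dot a x)) ∧
    ∃ x ∈ closure C, dot a x = β

/-- `ψ` is a valid function with respect to `f` and `S`. -/
def ValidFn {n : ℕ} (S : Set (E n)) (f : E n) (ψ : E n → ℝ) : Prop :=
  ∀ s : (E n) →₀ ℝ, (∀ r, 0 ≤ s r) →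
    (f + s.sum fun r c => c • r) ∈ S →
    1 ≤ s.sum fun r c => ψ r * c

/-- Sublinear: positively homogeneous and subadditive. -/
def Sublinear {n : ℕ} (ψ : E n → ℝ) : Prop :=
  (∀ t : ℝ, 0 ≤ t → ∀ r, ψ (t • r) = t * ψ r) ∧
  (∀ r r', ψ (r + r') ≤ ψ r + ψ r')

/-- Polar of `K`. -/
def polar {n : ℕ} (K : Set (E n)) : Set (E n) := {y | ∀ r ∈ K, dot y r ≤ 1}

/-- `K̂ = {y ∈ K* | ∃ x ∈ K, x·y = 1}`. -/
def Khat {n : ℕ} (K : Set (E n)) : Set (E n) :=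
  {y | y ∈ polar K ∧ ∃ x ∈ K, dot x y = 1}

/-- `ρ_K(r) = sup { y·r | y ∈ K̂ }`. -/
def rho {n : ℕ} (K : Set (E n)) (r : E n) : ℝ :=
  sSup ((fun y => dot y r) '' Khat K)

/-! The multiples `k • r`, read in the compact torus `ℝⁿ/ℤⁿ`, have a convergent subsequence, so two
of them with indices `a < b` are `ε`-close there; hence `(b - a) • r` is within `ε` of a lattice
point. Running this for `N • r` with `N ≥ lb` pushes the multiplier past `lb`, and translating by
the integral point `y` lands near the half-line. -/

open Metric

theorem exists_pos_nsmul_norm_lt {G : Type*} [SeminormedAddCommGroup G] [CompactSpace G]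
    (x : G) {δ : ℝ} (hδ : 0 < δ) : ∃ j : ℕ, 0 < j ∧ ‖j • x‖ < δ := by
  obtain ⟨a, -, φ, hφ, hlim⟩ :=
    isCompact_univ.tendsto_subseq (x := fun k : ℕ ↦ k • x) fun _ ↦ Set.mem_univ _
  obtain ⟨N, hN⟩ := cauchySeq_iff'.mp hlim.cauchySeq δ hδ
  have hlt : φ N < φ (N + 1) := hφ N.lt_succ_self
  refine ⟨φ (N + 1) - φ N, Nat.sub_pos_of_lt hlt, ?_⟩
  rw [sub_nsmul x hlt.le, ← sub_eq_add_neg, ← dist_eq_norm]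
  exact hN (N + 1) N.le_succ

theorem exists_ge_nsmul_norm_lt {G : Type*} [SeminormedAddCommGroup G] [CompactSpace G]
    (x : G) {δ : ℝ} (hδ : 0 < δ) (N : ℕ) : ∃ j : ℕ, N ≤ j ∧ ‖j • x‖ < δ := by
  obtain ⟨j, hj, hjx⟩ := exists_pos_nsmul_norm_lt (N • x) hδ
  exact ⟨j * N, Nat.le_mul_of_pos_left N hj, by rwa [mul_nsmul']⟩

theorem AddSubgroup.exists_ge_dist_nsmul_lt {G : Type*} [SeminormedAddCommGroup G]
    (L : AddSubgroup G) [CompactSpace (G ⧸ L)] (x : G) {δ : ℝ} (hδ : 0 < δ) (N : ℕ) :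
    ∃ j : ℕ, N ≤ j ∧ ∃ w ∈ L, dist (j • x) w < δ := by
  obtain ⟨j, hNj, hj⟩ := exists_ge_nsmul_norm_lt (x : G ⧸ L) hδ N
  rw [← QuotientAddGroup.mk_nsmul, QuotientAddGroup.norm_mk] at hj
  exact ⟨j, hNj, (infDist_lt_iff ⟨0, L.zero_mem⟩).mp hj⟩

instance IsZLattice.compactSpace_quotient {V : Type*} [NormedAddCommGroup V] [NormedSpace ℝ V]
    [FiniteDimensional ℝ V] (L : Submodule ℤ V) [DiscreteTopology L] [IsZLattice ℝ L] :
    CompactSpace (V ⧸ L.toAddSubgroup) := by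
  refine ⟨?_⟩
  have := IsZLattice.isCompact_range_of_periodic L
    (QuotientAddGroup.mk : V → V ⧸ L.toAddSubgroup) continuous_quot_mk
    (fun z w hw ↦ by simpa using hw)
  rwa [QuotientAddGroup.mk_surjective.range_eq] at this

abbrev intLattice (n : ℕ) : Submodule ℤ (E n) :=
  Submodule.span ℤ (Set.range (EuclideanSpace.basisFun (Fin n) ℝ).toBasis)

theorem mem_intLattice_iff {n : ℕ} {x : E n} : x ∈ intLattice n ↔ IsIntPt x := by
  rw [Module.Basis.mem_span_iff_repr_mem]
  simp [IsIntPt, eq_comm]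

/-- Dirichlet-type lemma: integral points come arbitrarily close to any
half-line starting at an integral point. -/
theorem stmt_4 {n : ℕ} (y r : E n) (hy : IsIntPt y) :
    ∀ ε : ℝ, 0 < ε → ∀ lb : ℝ, 0 ≤ lb →
    ∃ z : E n, IsIntPt z ∧
      Metric.infDist z {p : E n | ∃ l : ℝ, lb ≤ l ∧ p = y + l • r} < ε := by
  intro ε hε lb _
  obtain ⟨j, hj, w, hw, hdist⟩ :=
    (intLattice n).toAddSubgroup.exists_ge_dist_nsmul_lt r hε ⌈lb⌉₊
  refine ⟨y + w, mem_intLattice_iff.mp (add_mem (mem_intLattice_iff.mpr hy) hw), ?_⟩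
  have hmem : y + (j : ℝ) • r ∈ {p : E n | ∃ l : ℝ, lb ≤ l ∧ p = y + l • r} :=
    ⟨j, Nat.ceil_le.mp hj, rfl⟩
  calc infDist (y + w) _ ≤ dist (y + w) (y + (j : ℝ) • r) := infDist_le_dist_of_mem hmem
    _ < ε := by rwa [dist_add_left, dist_comm, Nat.cast_smul_eq_nsmul]
end
end

section
/- Let B ⊆ ℝⁿ be an S-free convex set such that B ∩ conv(S) has nonempty interior. Then for every vector r in rec(B) ∩ rec(conv(S)), the set B + span{r} = {b + λr : b ∈ B, λ ∈ ℝ} is S-free. -/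
open scoped BigOperators Pointwise

noncomputable section

/-!
Write a point `y ∈ S` of the interior of `B + ℝr` as `z + μr` with `z` in the interior of `B`.
Because `r` is a recession direction of `B`, the whole ray `z + tr` (`t ≥ -μ`) stays in the
interior of `B`, at uniform distance `ε` from its boundary. By simultaneous Dirichlet
approximation there are arbitrarily large integers `t` with `tr` within `η < ε` of an integral
vector `v`. Every row `a` of the rational system `Ax ≤ b` defining `S` satisfies `a·r ≤ 0`,
since `r` also recedes in `conv S`, so `a·v < η ‖a‖`; as `a·v` lies in `(1/D)ℤ` for a common
denominator `D` of `a`, it is `≤ 0` once `η` is small. Hence `y + v` is a point of `S`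
within `ε` of `z + (μ + t)r`, i.e. in the interior of `B`.
-/

open Filter Topology

open scoped RealInnerProductSpace

section Dot

variable {n : ℕ}

lemma dot_eq_inner (x y : E n) : dot x y = ⟪x, y⟫ := by
  simp [dot, PiLp.inner_apply, mul_comm]

lemma dot_add_right (a x y : E n) : dot a (x + y) = dot a x + dot a y := by
  simp only [dot_eq_inner, inner_add_right]

lemma dot_smul_right (a : E n) (c : ℝ) (x : E n) : dot a (c • x) = c * dot a x := by
  simp only [dot_eq_inner, real_inner_smul_right]

lemma convex_setOf_dot_le (a : E n) (β : ℝ) : Convex ℝ {x : E n | dot a x ≤ β} := by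
  simp only [dot_eq_inner]
  exact convex_halfSpace_le (innerₛₗ ℝ a).isLinear β

lemma dot_nonpos_of_mem_recCone {K : Set (E n)} {a r y : E n} {β : ℝ}
    (hK : ∀ x ∈ K, dot a x ≤ β) (hy : y ∈ K) (hr : r ∈ recCone K) : dot a r ≤ 0 := by
  by_contra! har
  have hfar := hK _ (hr y hy ((β - dot a y + 1) / dot a r)
    (div_nonneg (by linarith [hK y hy]) har.le))
  rw [dot_add_right, dot_smul_right, div_mul_cancel₀ _ har.ne'] at hfar
  linarith

end Dot

section Integrality

variable {n : ℕ}

lemma IsIntPt.add {x y : E n} (hx : IsIntPt x) (hy : IsIntPt y) : IsIntPt (x + y) := by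
  intro i
  obtain ⟨k, hk⟩ := hx i
  obtain ⟨l, hl⟩ := hy i
  exact ⟨k + l, by simp [hk, hl]⟩

lemma IsIntPt.exists_dot_eq_intCast {a x : E n} (ha : IsIntPt a) (hx : IsIntPt x) :
    ∃ k : ℤ, dot a x = k := by
  choose k hk using ha
  choose l hl using hx
  exact ⟨∑ i, k i * l i, by simp [dot, hk, hl]⟩

lemma IsRatVec.exists_nat_smul_isIntPt {a : E n} (ha : IsRatVec a) :
    ∃ D : ℕ, 0 < D ∧ IsIntPt ((D : ℝ) • a) := by
  choose q hq using ha
  refine ⟨∏ j, (q j).den, Finset.prod_pos fun j _ => (q j).pos, fun i => ?_⟩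
  obtain ⟨c, hc⟩ := Finset.dvd_prod_of_mem (fun j => (q j).den) (Finset.mem_univ i)
  refine ⟨c * (q i).num, ?_⟩
  rw [PiLp.smul_apply, smul_eq_mul, hq i, hc]
  have hnum := congrArg (fun y : ℚ => (y : ℝ)) (Rat.mul_den_eq_num (q i))
  push_cast at hnum ⊢
  rw [← hnum]
  ring

lemma IsRatVec.exists_pos_dot_nonpos {a : E n} (ha : IsRatVec a) :
    ∃ δ > 0, ∀ v, IsIntPt v → dot a v < δ → dot a v ≤ 0 := by
  obtain ⟨D, hD, hDa⟩ := ha.exists_nat_smul_isIntPt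
  have hD' : (0 : ℝ) < D := by exact_mod_cast hD
  refine ⟨1 / D, by positivity, fun v hv hav => ?_⟩
  obtain ⟨k, hk⟩ := hDa.exists_dot_eq_intCast hv
  rw [dot_eq_inner, real_inner_smul_left, ← dot_eq_inner] at hk
  have hk1 : (k : ℝ) < 1 := by
    rw [← hk]
    rwa [lt_div_iff₀ hD', mul_comm] at hav
  have hk0 : k ≤ 0 := by
    have : k < 1 := by exact_mod_cast hk1
    omega
  nlinarith [(Int.cast_nonpos (R := ℝ)).mpr hk0]

lemma IsRatVec.eventually_dot_nonpos {a r : E n} (ha : IsRatVec a) (har : dot a r ≤ 0) :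
    ∀ᶠ η in 𝓝[>] (0 : ℝ), ∀ t : ℝ, 0 ≤ t → ∀ v, IsIntPt v → ‖t • r - v‖ < η →
      dot a v ≤ 0 := by
  obtain ⟨δ, hδ, hsmall⟩ := ha.exists_pos_dot_nonpos
  filter_upwards [Ioo_mem_nhdsGT (div_pos hδ (by positivity : 0 < ‖a‖ + 1))]
    with η hη t ht v hv hvη
  refine hsmall v hv ?_
  have hsplit : dot a v = t * dot a r + ⟪a, v - t • r⟫ := by
    rw [inner_sub_right, real_inner_smul_right, ← dot_eq_inner, ← dot_eq_inner]
    ring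
  have herr : ⟪a, v - t • r⟫ ≤ ‖a‖ * η := by
    rw [← norm_neg, neg_sub] at hvη
    exact (real_inner_le_norm a _).trans (by gcongr)
  have hη : (‖a‖ + 1) * η < δ := by rw [← lt_div_iff₀' (by positivity)]; exact hη.2
  nlinarith [mul_nonpos_of_nonneg_of_nonpos ht har, norm_nonneg a]

/-- Simultaneous Dirichlet approximation, via Bolzano–Weierstrass on the fractional parts of
the multiples `k • x`. -/
lemma exists_nat_isIntPt_norm_smul_sub_lt (x : E n) {ε : ℝ} (hε : 0 < ε) (N : ℕ) :
    ∃ t : ℕ, N ≤ t ∧ ∃ v : E n, IsIntPt v ∧ ‖(t : ℝ) • x - v‖ < ε := by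
  set u : ℕ → E n := fun k => WithLp.toLp 2 fun i => Int.fract ((k : ℝ) * x i)
  have hcube : IsCompact (WithLp.toLp 2 '' Set.Icc 0 1 : Set (E n)) :=
    isCompact_Icc.image (PiLp.continuous_toLp 2 _)
  have hu : ∀ k, u k ∈ WithLp.toLp 2 '' Set.Icc 0 1 := fun k =>
    ⟨_, ⟨fun i => Int.fract_nonneg _, fun i => (Int.fract_lt_one _).le⟩, rfl⟩
  obtain ⟨c, -, φ, hφ, hlim⟩ := hcube.tendsto_subseq hu
  obtain ⟨K, hK⟩ := Metric.tendsto_atTop.mp hlim (ε / 2) (half_pos hε)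
  have hkl : φ K + N ≤ φ (K + N) := by
    rw [add_comm (φ K), add_comm K]
    exact hφ.add_le_nat N K
  set k := φ K
  set l := φ (K + N)
  refine ⟨l - k, by omega, WithLp.toLp 2 fun i => ((⌊(l : ℝ) * x i⌋ - ⌊(k : ℝ) * x i⌋ : ℤ) : ℝ),
    fun i => ⟨_, rfl⟩, ?_⟩
  have hdiff : ((l - k : ℕ) : ℝ) • x
      - WithLp.toLp 2 (fun i => ((⌊(l : ℝ) * x i⌋ - ⌊(k : ℝ) * x i⌋ : ℤ) : ℝ)) = u l - u k := by
    ext i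
    simp only [u, PiLp.sub_apply, PiLp.smul_apply, smul_eq_mul, Int.fract,
      Nat.cast_sub (by omega : k ≤ l)]
    push_cast
    ring
  rw [hdiff, ← dist_eq_norm]
  calc dist (u l) (u k) ≤ dist (u l) c + dist (u k) c := dist_triangle_right _ _ _
    _ < ε / 2 + ε / 2 := add_lt_add (hK _ (by omega)) (hK _ le_rfl)
    _ = ε := add_halves ε

end Integrality

section Geometry

lemma exists_mem_interior_add_smul_eq {V : Type*} [NormedAddCommGroup V] [NormedSpace ℝ V]
    {B : Set V} (hB : Convex ℝ B) (hB0 : (interior B).Nonempty) {r y : V}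
    (hy : y ∈ interior {x : V | ∃ b ∈ B, ∃ t : ℝ, x = b + t • r}) :
    ∃ z ∈ interior B, ∃ μ : ℝ, y = z + μ • r := by
  obtain ⟨w, hw⟩ := hB0
  have hpush : ∀ᶠ s in 𝓝[>] (0 : ℝ),
      y + s • (y - w) ∈ {x : V | ∃ b ∈ B, ∃ t : ℝ, x = b + t • r} := by
    have hc : Tendsto (fun s : ℝ => y + s • (y - w)) (𝓝 0) (𝓝 y) := by
      have : Continuous fun s : ℝ => y + s • (y - w) := by fun_prop
      simpa using this.tendsto 0
    exact nhdsWithin_le_nhds (hc.eventually_mem (mem_interior_iff_mem_nhds.mp hy))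
  obtain ⟨s, ⟨b, hb, t, hbt⟩, hs⟩ := (hpush.and self_mem_nhdsWithin).exists
  have hs1 : (1 + s) ≠ 0 := by positivity
  refine ⟨(s / (1 + s)) • w + (1 / (1 + s)) • b,
    hB.combo_interior_closure_mem_interior hw (subset_closure hb) (by positivity) (by positivity)
      (by field_simp; ring), t / (1 + s), ?_⟩
  have hy' : (1 + s) • y = s • w + b + t • r := by
    rw [add_assoc, ← hbt]
    module
  calc y = (1 + s)⁻¹ • ((1 + s) • y) := (inv_smul_smul₀ hs1 y).symm
    _ = _ := by
      rw [hy']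
      match_scalars <;> field_simp

lemma add_smul_mem_interior_of_mem_recCone {n : ℕ} {B : Set (E n)} {r x : E n} {t : ℝ}
    (hr : r ∈ recCone B) (ht : 0 ≤ t) (hx : x ∈ interior B) : x + t • r ∈ interior B := by
  rw [mem_interior_iff_mem_nhds] at hx ⊢
  have hback : Tendsto (fun u => u - t • r) (𝓝 (x + t • r)) (𝓝 x) := by
    simpa using (continuous_sub_right (t • r)).tendsto (x + t • r)
  filter_upwards [hback hx] with u hu
  simpa using hr _ hu t ht

end Geometry

theorem stmt_5_general {n : ℕ} (S : Set (E n)) (hS : IsIntPtsOfRatPolyhedron S)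
    (B : Set (E n)) (hconv : Convex ℝ B) (hfree : SFree S B)
    (hne : (interior (B ∩ convexHull ℝ S)).Nonempty)
    (r : E n) (hr : r ∈ recCone B ∩ recCone (convexHull ℝ S)) :
    SFree S {x : E n | ∃ b ∈ B, ∃ t : ℝ, x = b + t • r} := by
  intro y hy hyS
  obtain ⟨m, A, b, hA, -, rfl⟩ := hS
  obtain ⟨z, hz, μ, rfl⟩ := exists_mem_interior_add_smul_eq hconv
    (hne.mono (interior_mono Set.inter_subset_left)) hy
  obtain ⟨ε, hε, hball⟩ := Metric.isOpen_iff.mp isOpen_interior z hz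
  have hAr : ∀ i, dot (A i) r ≤ 0 := fun i =>
    dot_nonpos_of_mem_recCone (convexHull_min (fun x hx => hx.2 i) (convex_setOf_dot_le _ _))
      (subset_convexHull ℝ _ hyS) hr.2
  obtain ⟨η, hrows, hη0, hηε⟩ :=
    ((eventually_all.2 fun i => (hA i).eventually_dot_nonpos (hAr i)).and
      (Ioo_mem_nhdsGT hε)).exists
  obtain ⟨t, hμt, v, hv, hvt⟩ := exists_nat_isIntPt_norm_smul_sub_lt r hη0 ⌈-μ⌉₊
  have hpS : z + μ • r + v ∈ {x | IsIntPt x ∧ ∀ i, dot (A i) x ≤ b i} :=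
    ⟨hyS.1.add hv, fun i => by
      rw [dot_add_right]
      linarith [hyS.2 i, hrows i t (Nat.cast_nonneg t) v hv hvt]⟩
  have hpB : z + μ • r + v ∈ interior B := by
    have hnear : z + (v - (t : ℝ) • r) ∈ interior B := hball (by
      rw [Metric.mem_ball, dist_eq_norm, add_sub_cancel_left, ← norm_neg, neg_sub]
      exact hvt.trans hηε)
    have hμt' : 0 ≤ μ + t := by linarith [(Nat.le_ceil (-μ)).trans (Nat.cast_le.mpr hμt)]
    convert add_smul_mem_interior_of_mem_recCone hr.1 hμt' hnear using 1
    module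
  exact hfree _ hpB hpS

/-- If B is an S-free convex set with int(B ∩ conv S) ≠ ∅, then for every
r ∈ rec(B) ∩ rec(conv S), the set B + span{r} is S-free. -/
theorem stmt_5 {n : ℕ} (S : Set (E n)) (hS : IsIntPtsOfRatPolyhedron S)
    (hdim : FullDimSet S) (B : Set (E n)) (hconv : Convex ℝ B) (hfree : SFree S B)
    (hne : (interior (B ∩ convexHull ℝ S)).Nonempty)
    (r : E n) (hr : r ∈ recCone B ∩ recCone (convexHull ℝ S)) :
    SFree S {x : E n | ∃ b ∈ B, ∃ t : ℝ, x = b + t • r} :=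
  stmt_5_general S hS B hconv hfree hne r hr
end
end

section
/- Let ψ : ℝⁿ → ℝ be a sublinear function such that the set B_ψ = {x ∈ ℝⁿ : ψ(x − f) ≤ 1} is S-free. Then ψ is a valid function, i.e., for every finitely supported function s : ℝⁿ → ℝ≥0 with f + Σ_r r·s_r ∈ S, one has Σ_r ψ(r)·s_r ≥ 1. -/
open scoped BigOperators Pointwise

noncomputable section

/-! If `∑ ψ(r) s_r < 1`, subadditivity and positive homogeneity give `ψ(x - f) < 1` for the point
`x = f + ∑ r s_r ∈ S`. A sublinear function is convex, hence continuous on `ℝⁿ`, so the strict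
sublevel set `{x | ψ(x - f) < 1}` is open and lies in the interior of `B_ψ`, contradicting
`S`-freeness. -/

namespace Sublinear

variable {n : ℕ} {ψ : E n → ℝ}

lemma map_zero (h : Sublinear ψ) : ψ 0 = 0 := by
  simpa using h.1 0 le_rfl 0

lemma convexOn (h : Sublinear ψ) : ConvexOn ℝ Set.univ ψ :=
  ⟨convex_univ, fun x _ y _ a b ha hb _ => by
    simpa only [h.1 a ha, h.1 b hb, smul_eq_mul] using h.2 (a • x) (b • y)⟩

lemma continuous (h : Sublinear ψ) : Continuous ψ :=
  h.convexOn.locallyLipschitz.continuous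

lemma map_finsuppSum_le (h : Sublinear ψ) (s : E n →₀ ℝ) (hs : ∀ r, 0 ≤ s r) :
    ψ (s.sum fun r c => c • r) ≤ s.sum fun r c => ψ r * c :=
  (Finset.le_sum_of_subadditive ψ h.map_zero.le h.2 _ _).trans_eq <|
    Finset.sum_congr rfl fun r _ => by rw [h.1 _ (hs r), mul_comm]

lemma setOf_lt_subset_interior_setOf_le (h : Sublinear ψ) (f : E n) :
    {x | ψ (x - f) < 1} ⊆ interior {x | ψ (x - f) ≤ 1} :=
  interior_maximal (Set.ofPred_subset_ofPred.mpr fun _ => le_of_lt)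
    (isOpen_lt (h.continuous.comp (continuous_sub_right f)) continuous_const)

end Sublinear

theorem stmt_10_general {n : ℕ} (S : Set (E n)) (f : E n) (ψ : E n → ℝ) (hsub : Sublinear ψ)
    (hfree : SFree S {x : E n | ψ (x - f) ≤ 1}) :
    ValidFn S f ψ := by
  intro s hs hmem
  by_contra! hlt
  have hx : ψ ((f + s.sum fun r c => c • r) - f) < 1 := by
    rw [add_sub_cancel_left]
    exact (hsub.map_finsuppSum_le s hs).trans_lt hlt
  exact hfree _ (hsub.setOf_lt_subset_interior_setOf_le f hx) hmem

/-- A sublinear function ψ whose set B_ψ = {x | ψ(x-f) ≤ 1} is S-free is a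
valid function. -/
theorem stmt_10 {n : ℕ} (S : Set (E n)) (hS : IsIntPtsOfRatPolyhedron S)
    (hdim : FullDimSet S) (f : E n) (hf : f ∈ convexHull ℝ S) (hfi : ¬ IsIntPt f)
    (ψ : E n → ℝ) (hsub : Sublinear ψ)
    (hfree : SFree S {x : E n | ψ (x - f) ≤ 1}) :
    ValidFn S f ψ :=
  stmt_10_general S f ψ hsub hfree
end
end

section
/- Every valid function ψ : ℝⁿ → ℝ is dominated by a sublinear valid function, i.e., there exists a valid function ψ̄ : ℝⁿ → ℝ that is positively homogeneous and subadditive and satisfies ψ̄(r) ≤ ψ(r) for all r ∈ ℝⁿ. -/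
open scoped BigOperators Pointwise

noncomputable section

/-!
Replace `ψ` by its sublinear hull: the value at `r` is the infimum of `∑ s_v ψ(v)` over all
nonnegative finite combinations `∑ s_v v = r`. It is sublinear and below `ψ`. It is valid:
if `f + r ∈ S`, validity of `ψ` bounds every such combination of `r` by `1`, so the hull is
`≥ 1` at `r`, and by sublinearity `∑ s_r ψ̄(r) ≥ ψ̄(∑ s_r r)`. The hull is finite because `ψ`
is nonnegative on nonnegative combinations of `0`: such a combination can be added, scaled up
arbitrarily, to the single ray `x - f` towards a point `x ∈ S`, and validity of the result
forces its value to be nonnegative.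
-/

section SublinearHull

variable {V : Type*} [AddCommGroup V] [Module ℝ V]

def reprValues (ψ : V → ℝ) (r : V) : Set ℝ :=
  Finsupp.linearCombination ℝ ψ '' {s | 0 ≤ s ∧ Finsupp.linearCombination ℝ id s = r}

/-- `sInf` of a set of reals that is not bounded below is `0`, so this is the hull only when `ψ`
is nonnegative on `reprValues ψ 0` (see `bddBelow_reprValues`). -/
def sublinearHull (ψ : V → ℝ) (r : V) : ℝ :=
  sInf (reprValues ψ r)

variable {ψ : V → ℝ}

theorem mem_reprValues_self (r : V) : ψ r ∈ reprValues ψ r :=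
  ⟨Finsupp.single r 1, ⟨by simp, by simp⟩, by simp⟩

theorem reprValues_nonempty (r : V) : (reprValues ψ r).Nonempty :=
  ⟨ψ r, mem_reprValues_self r⟩

theorem zero_mem_reprValues_zero : (0 : ℝ) ∈ reprValues ψ 0 :=
  ⟨0, ⟨le_rfl, map_zero _⟩, map_zero _⟩

theorem add_mem_reprValues {r r' : V} {a a' : ℝ} (ha : a ∈ reprValues ψ r)
    (ha' : a' ∈ reprValues ψ r') : a + a' ∈ reprValues ψ (r + r') := by
  obtain ⟨s, ⟨hs, rfl⟩, rfl⟩ := ha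
  obtain ⟨s', ⟨hs', rfl⟩, rfl⟩ := ha'
  exact ⟨s + s', ⟨add_nonneg hs hs', map_add _ _ _⟩, map_add _ _ _⟩

theorem reprValues_add_subset (r r' : V) :
    reprValues ψ r + reprValues ψ r' ⊆ reprValues ψ (r + r') := by
  rintro _ ⟨a, ha, a', ha', rfl⟩
  exact add_mem_reprValues ha ha'

theorem smul_mem_reprValues {t : ℝ} (ht : 0 ≤ t) {r : V} {a : ℝ} (ha : a ∈ reprValues ψ r) :
    t * a ∈ reprValues ψ (t • r) := by
  obtain ⟨s, ⟨hs, rfl⟩, rfl⟩ := ha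
  exact ⟨t • s, ⟨smul_nonneg ht hs, map_smul _ _ _⟩, map_smul _ _ _⟩

theorem reprValues_smul {t : ℝ} (ht : 0 < t) (r : V) :
    reprValues ψ (t • r) = t • reprValues ψ r := by
  refine subset_antisymm (fun a ha => ⟨t⁻¹ * a, ?_, by simp [ht.ne']⟩) ?_
  · rintro _ ⟨a, ha, rfl⟩
    exact smul_mem_reprValues ht.le ha
  · simpa [smul_smul, ht.ne'] using smul_mem_reprValues (inv_nonneg.2 ht.le) ha

section Bounded

variable (h0 : ∀ a ∈ reprValues ψ 0, 0 ≤ a)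
include h0

theorem bddBelow_reprValues (r : V) : BddBelow (reprValues ψ r) := by
  refine ⟨-ψ (-r), fun a ha => ?_⟩
  have := h0 _ (by simpa using add_mem_reprValues ha (mem_reprValues_self (-r)))
  linarith

theorem sublinearHull_le_of_mem {r : V} {a : ℝ} (ha : a ∈ reprValues ψ r) :
    sublinearHull ψ r ≤ a :=
  csInf_le (bddBelow_reprValues h0 r) ha

theorem sublinearHull_le (r : V) : sublinearHull ψ r ≤ ψ r :=
  sublinearHull_le_of_mem h0 (mem_reprValues_self r)

theorem sublinearHull_zero : sublinearHull ψ 0 = 0 :=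
  le_antisymm (sublinearHull_le_of_mem h0 zero_mem_reprValues_zero)
    (le_csInf (reprValues_nonempty 0) h0)

theorem sublinearHull_smul {t : ℝ} (ht : 0 ≤ t) (r : V) :
    sublinearHull ψ (t • r) = t * sublinearHull ψ r := by
  rcases ht.eq_or_lt with rfl | ht
  · simp [sublinearHull_zero h0]
  · rw [sublinearHull, reprValues_smul ht, Real.sInf_smul_of_nonneg ht.le, smul_eq_mul,
      sublinearHull]

theorem sublinearHull_add_le (r r' : V) :
    sublinearHull ψ (r + r') ≤ sublinearHull ψ r + sublinearHull ψ r' := by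
  rw [sublinearHull, sublinearHull, sublinearHull, ← csInf_add (reprValues_nonempty r)
    (bddBelow_reprValues h0 r) (reprValues_nonempty r') (bddBelow_reprValues h0 r')]
  exact csInf_le_csInf (bddBelow_reprValues h0 _)
    ((reprValues_nonempty r).add (reprValues_nonempty r')) (reprValues_add_subset r r')

end Bounded

end SublinearHull

theorem Sublinear.map_linearCombination_le {n : ℕ} {ψ : E n → ℝ} (hψ : Sublinear ψ)
    {s : E n →₀ ℝ} (hs : 0 ≤ s) :
    ψ (Finsupp.linearCombination ℝ id s) ≤ Finsupp.linearCombination ℝ ψ s := by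
  obtain ⟨hsmul, hadd⟩ := hψ
  have hzero : ψ 0 = 0 := by simpa using hsmul 0 le_rfl 0
  rw [Finsupp.linearCombination_apply, Finsupp.linearCombination_apply, Finsupp.sum,
    Finsupp.sum]
  refine (Finset.le_sum_of_subadditive ψ hzero.le hadd _ _).trans_eq ?_
  exact Finset.sum_congr rfl fun r _ => hsmul _ (hs r) r

theorem sublinear_sublinearHull {n : ℕ} {ψ : E n → ℝ} (h0 : ∀ a ∈ reprValues ψ 0, 0 ≤ a) :
    Sublinear (sublinearHull ψ) :=
  ⟨fun _ ht r => sublinearHull_smul h0 ht r, sublinearHull_add_le h0⟩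

theorem validFn_iff {n : ℕ} {S : Set (E n)} {f : E n} {ψ : E n → ℝ} :
    ValidFn S f ψ ↔ ∀ s : E n →₀ ℝ, 0 ≤ s →
      f + Finsupp.linearCombination ℝ id s ∈ S → 1 ≤ Finsupp.linearCombination ℝ ψ s := by
  simp only [ValidFn, Finsupp.linearCombination_apply, id, smul_eq_mul, mul_comm,
    Finsupp.le_def, Finsupp.coe_zero, Pi.zero_apply]

namespace ValidFn

variable {n : ℕ} {S : Set (E n)} {f : E n} {ψ : E n → ℝ}

theorem nonneg_of_mem_reprValues_zero (hv : ValidFn S f ψ) (hS : S.Nonempty) :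
    ∀ a ∈ reprValues ψ 0, 0 ≤ a := by
  obtain ⟨x, hx⟩ := hS
  rintro _ ⟨s, ⟨hs, hs0⟩, rfl⟩
  have hray : ∀ t : ℝ, 0 ≤ t →
      1 ≤ ψ (x - f) + t * Finsupp.linearCombination ℝ ψ s := fun t ht => by
    have := validFn_iff.1 hv (Finsupp.single (x - f) 1 + t • s)
      (add_nonneg (by simp) (smul_nonneg ht hs)) (by simpa [hs0] using hx)
    simpa using this
  by_contra! hneg
  have := hray ((|ψ (x - f)| + 1) / -Finsupp.linearCombination ℝ ψ s)
    (div_nonneg (by positivity) (neg_nonneg.2 hneg.le))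
  rw [div_mul_eq_mul_div, div_neg, mul_div_cancel_right₀ _ hneg.ne] at this
  linarith [le_abs_self (ψ (x - f))]

theorem sublinearHull (hv : ValidFn S f ψ) (h0 : ∀ a ∈ reprValues ψ 0, 0 ≤ a) :
    ValidFn S f (_root_.sublinearHull ψ) := by
  refine validFn_iff.2 fun s hs hmem => ?_
  calc 1 ≤ _root_.sublinearHull ψ (Finsupp.linearCombination ℝ id s) :=
        le_csInf (reprValues_nonempty _) fun _ ⟨σ, ⟨hσ, hσs⟩, hσa⟩ =>
          hσa ▸ validFn_iff.1 hv σ hσ (hσs ▸ hmem)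
    _ ≤ _ := (sublinear_sublinearHull h0).map_linearCombination_le hs

end ValidFn

theorem stmt_11_general {n : ℕ} (S : Set (E n)) (hdim : FullDimSet S) (f : E n) (ψ : E n → ℝ)
    (hv : ValidFn S f ψ) :
    ∃ ψ' : E n → ℝ, ValidFn S f ψ' ∧ Sublinear ψ' ∧ ∀ r, ψ' r ≤ ψ r := by
  obtain ⟨p, hp, -⟩ := hdim
  have h0 := hv.nonneg_of_mem_reprValues_zero ⟨p 0, hp 0⟩
  exact ⟨sublinearHull ψ, hv.sublinearHull h0, sublinear_sublinearHull h0, sublinearHull_le h0⟩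

/-- Every valid function is dominated by a sublinear valid function. -/
theorem stmt_11 {n : ℕ} (S : Set (E n)) (hS : IsIntPtsOfRatPolyhedron S)
    (hdim : FullDimSet S) (f : E n) (hf : f ∈ convexHull ℝ S) (hfi : ¬ IsIntPt f)
    (ψ : E n → ℝ) (hv : ValidFn S f ψ) :
    ∃ ψ' : E n → ℝ, ValidFn S f ψ' ∧ Sublinear ψ' ∧ ∀ r, ψ' r ≤ ψ r :=
  stmt_11_general S hdim f ψ hv
end
end
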